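/- arXiv:1711.04852 — 8 statements merged into one kernel-verified Lean document; each statement's English description precedes it below -/
import Mathlib

section
/- For all a > 0 and λ > 0, setting x := 2√(aλ), one has ∫₀^∞ λ e^{−λt} e^{−a/t} dt ≤ √(π/x) (x + 1/2) e^{−x}. -/
/-!
The substitution `t = √(a/l) u` turns the integral into `s ∫₀^∞ e^{-s(u + 1/u)} du` with
`s = √(a l)`. Since `u + 1/u - 2 = (u - 1)² / u ≥ (u - 1)² / c` on `(0, c]`, the integrand is
at most `e^{-2s}` times a Gaussian centred at `1` on `(0, 1]` (with `c = 1`) and on `(1, 3]` (with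
`c = 3`), and at most `e^{-su}` beyond `3`. The two half-Gaussians give `(1 + √3)/2 · √(π s)`,
which is below the main term `√2 · √(π s)`, and the tail `e^{-3s}` is absorbed by the term
`1/2 · √(π/(2s)) e^{-2s}` because `8 s e^{-2s} ≤ π`.
-/

open MeasureTheory Real Set

theorem integral_exp_neg_mul_sq_sub_Ioi (b r : ℝ) :
    ∫ t in Ioi r, exp (-b * (t - r) ^ 2) = √(π / b) / 2 := by
  have h := (measurePreserving_add_right volume r).setIntegral_preimage_emb
    (MeasurableEquiv.addRight r).measurableEmbedding (fun t => exp (-b * (t - r) ^ 2)) (Ioi r)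
  have hpre : (· + r) ⁻¹' Ioi r = Ioi 0 := by ext; simp
  rw [← h, hpre]
  simpa using integral_gaussian_Ioi b

theorem integral_exp_neg_mul_sq_sub_Iic (b r : ℝ) :
    ∫ t in Iic r, exp (-b * (t - r) ^ 2) = √(π / b) / 2 := by
  rw [← integral_exp_neg_mul_sq_sub_Ioi b (-r), ← integral_comp_neg_Iic]
  refine setIntegral_congr_fun measurableSet_Iic fun t _ => ?_
  ring_nf

theorem integral_exp_neg_mul_Ioi {b : ℝ} (hb : 0 < b) (c : ℝ) :
    ∫ t in Ioi c, exp (-b * t) = exp (-b * c) / b := by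
  have h := integral_comp_mul_left_Ioi (fun x => exp (-x)) c hb
  simp only [smul_eq_mul, integral_exp_neg_Ioi] at h
  simp only [neg_mul, h]
  field_simp

theorem sq_sub_one_div_le_add_inv_sub_two {u c : ℝ} (hu : 0 < u) (huc : u ≤ c) :
    (u - 1) ^ 2 / c ≤ u + u⁻¹ - 2 := by
  have hid : u + u⁻¹ - 2 = (u - 1) ^ 2 / u := by field_simp; ring
  rw [hid]
  exact div_le_div_of_nonneg_left (sq_nonneg _) hu huc

theorem exp_neg_mul_add_inv_le {s u c : ℝ} (hs : 0 ≤ s) (hu : 0 < u) (huc : u ≤ c) :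
    exp (-(s * (u + u⁻¹))) ≤ exp (-(2 * s)) * exp (-(s / c) * (u - 1) ^ 2) := by
  have h := mul_le_mul_of_nonneg_left (sq_sub_one_div_le_add_inv_sub_two hu huc) hs
  rw [← exp_add, exp_le_exp]
  rw [neg_mul, div_mul_eq_mul_div, mul_div_assoc]
  linarith

theorem one_add_sqrt_three_le_two_mul_sqrt_two : 1 + √3 ≤ 2 * √2 := by
  refine (pow_le_pow_iff_left₀ (by positivity) (by positivity) two_ne_zero).1 ?_
  have h3 : √3 ≤ 2 := by rw [sqrt_le_left] <;> norm_num
  nlinarith [sq_sqrt (zero_le_two : (0 : ℝ) ≤ 2), sq_sqrt (by norm_num : (0 : ℝ) ≤ 3)]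

theorem two_mul_exp_neg_le_sqrt_pi_div {s : ℝ} (hs : 0 < s) :
    2 * exp (-s) ≤ √(π / (2 * s)) := by
  rw [le_sqrt (by positivity) (by positivity), le_div_iff₀ (by positivity)]
  have hsq : (2 * exp (-s)) ^ 2 * exp (2 * s) = 4 := by
    rw [mul_pow, ← exp_nat_mul, mul_assoc, ← exp_add]; norm_num
  have h := quadratic_le_exp_of_nonneg (by positivity : 0 ≤ 2 * s)
  nlinarith [pi_gt_three, exp_pos (2 * s), sq_nonneg (2 * exp (-s))]

theorem integrableOn_exp_neg_mul_add_inv {s : ℝ} (hs : 0 < s) :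
    IntegrableOn (fun u => exp (-(s * (u + u⁻¹)))) (Ioi 0) := by
  refine (exp_neg_integrableOn_Ioi 0 hs).mono' (by fun_prop) ?_
  filter_upwards [ae_restrict_mem measurableSet_Ioi] with u hu
  rw [norm_of_nonneg (exp_pos _).le, exp_le_exp, neg_mul, neg_le_neg_iff, mul_add]
  have : 0 ≤ s * u⁻¹ := mul_nonneg hs.le (inv_nonneg.2 (le_of_lt hu))
  linarith

theorem setIntegral_exp_neg_mul_add_inv_le {s c : ℝ} (hs : 0 < s) (hc : 0 < c) {S T : Set ℝ}
    (hS : MeasurableSet S) (hSc : S ⊆ Ioc 0 c) (hST : S ⊆ T) :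
    ∫ u in S, exp (-(s * (u + u⁻¹)))
      ≤ exp (-(2 * s)) * ∫ u in T, exp (-(s / c) * (u - 1) ^ 2) := by
  have hgauss : Integrable fun u : ℝ => exp (-(2 * s)) * exp (-(s / c) * (u - 1) ^ 2) :=
    ((integrable_exp_neg_mul_sq (div_pos hs hc)).comp_sub_right 1).const_mul _
  rw [← integral_const_mul]
  calc ∫ u in S, exp (-(s * (u + u⁻¹)))
      ≤ ∫ u in S, exp (-(2 * s)) * exp (-(s / c) * (u - 1) ^ 2) :=
        setIntegral_mono_on ((integrableOn_exp_neg_mul_add_inv hs).mono_set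
          (hSc.trans Ioc_subset_Ioi_self)) hgauss.integrableOn hS
          fun u hu => exp_neg_mul_add_inv_le hs.le (hSc hu).1 (hSc hu).2
    _ ≤ ∫ u in T, exp (-(2 * s)) * exp (-(s / c) * (u - 1) ^ 2) :=
        setIntegral_mono_set hgauss.integrableOn (.of_forall fun _ => by positivity)
          hST.eventuallyLE

theorem setIntegral_Ioi_exp_neg_mul_add_inv_le {s c : ℝ} (hs : 0 < s) (hc : 0 ≤ c) :
    ∫ u in Ioi c, exp (-(s * (u + u⁻¹))) ≤ exp (-s * c) / s := by
  rw [← integral_exp_neg_mul_Ioi hs]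
  refine setIntegral_mono_on ((integrableOn_exp_neg_mul_add_inv hs).mono_set
    (Ioi_subset_Ioi hc)) (exp_neg_integrableOn_Ioi c hs) measurableSet_Ioi fun u hu => ?_
  have : 0 ≤ s * u⁻¹ := mul_nonneg hs.le (inv_nonneg.2 (hc.trans (le_of_lt hu)))
  rw [exp_le_exp, neg_mul, neg_le_neg_iff, mul_add]
  linarith

theorem setIntegral_Ioi_eq_Ioc_add_Ioc_add_Ioi {f : ℝ → ℝ} {a b c : ℝ} (hab : a ≤ b)
    (hbc : b ≤ c) (hf : IntegrableOn f (Ioi a)) :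
    ∫ u in Ioi a, f u
      = (∫ u in Ioc a b, f u) + ((∫ u in Ioc b c, f u) + ∫ u in Ioi c, f u) := by
  rw [← Ioc_union_Ioi_eq_Ioi hab, setIntegral_union (Ioc_disjoint_Ioi le_rfl) measurableSet_Ioi
    (hf.mono_set Ioc_subset_Ioi_self) (hf.mono_set (Ioi_subset_Ioi hab)),
    ← Ioc_union_Ioi_eq_Ioi hbc, setIntegral_union (Ioc_disjoint_Ioi le_rfl) measurableSet_Ioi
    (hf.mono_set fun u hu => hab.trans_lt hu.1) (hf.mono_set (Ioi_subset_Ioi (hab.trans hbc)))]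

theorem integral_exp_neg_mul_add_inv_le {s : ℝ} (hs : 0 < s) :
    ∫ u in Ioi 0, exp (-(s * (u + u⁻¹)))
      ≤ exp (-(2 * s)) * (√(π / s) / 2) + (exp (-(2 * s)) * (√3 * √(π / s) / 2)
          + exp (-(2 * s)) * exp (-s) / s) := by
  have hA := setIntegral_exp_neg_mul_add_inv_le hs one_pos measurableSet_Ioc subset_rfl
    Ioc_subset_Iic_self
  have hB := setIntegral_exp_neg_mul_add_inv_le hs three_pos measurableSet_Ioc
    (Ioc_subset_Ioc_left zero_le_one) Ioc_subset_Ioi_self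
  have hC := setIntegral_Ioi_exp_neg_mul_add_inv_le hs three_pos.le
  rw [integral_exp_neg_mul_sq_sub_Iic, div_one] at hA
  have hq3 : √(π / (s / 3)) = √3 * √(π / s) := by
    rw [← sqrt_mul (by norm_num)]; congr 1; field_simp
  rw [integral_exp_neg_mul_sq_sub_Ioi, hq3] at hB
  have hexp : exp (-s * 3) = exp (-(2 * s)) * exp (-s) := by rw [← exp_add]; ring_nf
  rw [hexp] at hC
  rw [setIntegral_Ioi_eq_Ioc_add_Ioc_add_Ioi zero_le_one (by norm_num : (1 : ℝ) ≤ 3)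
    (integrableOn_exp_neg_mul_add_inv hs)]
  exact add_le_add hA (add_le_add hB hC)

theorem mul_integral_exp_neg_mul_add_inv_le {s : ℝ} (hs : 0 < s) :
    s * ∫ u in Ioi 0, exp (-(s * (u + u⁻¹)))
      ≤ √(π / (2 * s)) * (2 * s + 1 / 2) * exp (-(2 * s)) := by
  have hq2 : √(π / s) = √2 * √(π / (2 * s)) := by
    rw [← sqrt_mul (by norm_num)]; congr 1; field_simp
  calc s * ∫ u in Ioi 0, exp (-(s * (u + u⁻¹)))
      ≤ s * (exp (-(2 * s)) * (√(π / s) / 2) + (exp (-(2 * s)) * (√3 * √(π / s) / 2)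
          + exp (-(2 * s)) * exp (-s) / s)) := by gcongr; exact integral_exp_neg_mul_add_inv_le hs
    _ = exp (-(2 * s)) * ((1 + √3) * (s * √(π / s)) / 2 + exp (-s)) := by field_simp; ring
    _ ≤ exp (-(2 * s)) * (2 * √2 * (s * √(π / s)) / 2 + √(π / (2 * s)) / 2) := by
        gcongr
        · exact one_add_sqrt_three_le_two_mul_sqrt_two
        · linarith [two_mul_exp_neg_le_sqrt_pi_div hs]
    _ = √(π / (2 * s)) * (2 * s + 1 / 2) * exp (-(2 * s)) := by
        rw [hq2]; ring_nf; rw [sq_sqrt zero_le_two]; ring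

theorem integral_mul_exp_neg_mul_mul_exp_neg_div {a l : ℝ} (ha : 0 < a) (hl : 0 < l) :
    ∫ t in Ioi 0, l * exp (-l * t) * exp (-a / t)
      = √(a * l) * ∫ u in Ioi 0, exp (-(√(a * l) * (u + u⁻¹))) := by
  have hpa := sqrt_pos.2 ha
  have hpl := sqrt_pos.2 hl
  have h := integral_comp_mul_left_Ioi (fun t => l * exp (-l * t) * exp (-a / t)) 0
    (div_pos hpa hpl)
  rw [mul_zero, smul_eq_mul, eq_inv_mul_iff_mul_eq₀ (div_pos hpa hpl).ne'] at h
  rw [← h, ← integral_const_mul, ← integral_const_mul]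
  refine setIntegral_congr_fun measurableSet_Ioi fun u hu => ?_
  have hla : √a / √l * l = √a * √l := by
    field_simp; rw [sq_sqrt hl.le]
  rw [sqrt_mul ha.le, mul_assoc l, ← exp_add, ← mul_assoc, hla]
  congr 2
  field_simp [(mem_Ioi.1 hu).ne']
  rw [sq_sqrt ha.le, sq_sqrt hl.le]
  ring

/-- for all `a > 0` and `l > 0`, with `x := 2√(a·l)`,
`∫₀^∞ l e^{−l t} e^{−a/t} dt ≤ √(π/x) (x + 1/2) e^{−x}`. -/
theorem exponential_laplace_integral_bound (a l : ℝ) (ha : 0 < a) (hl : 0 < l) :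
    ∫ t in Set.Ioi (0 : ℝ), l * Real.exp (-l * t) * Real.exp (-a / t)
      ≤ Real.sqrt (Real.pi / (2 * Real.sqrt (a * l)))
          * (2 * Real.sqrt (a * l) + 1 / 2)
          * Real.exp (-(2 * Real.sqrt (a * l))) := by
  rw [integral_mul_exp_neg_mul_mul_exp_neg_div ha hl]
  exact mul_integral_exp_neg_mul_add_inv_le (sqrt_pos.2 (mul_pos ha hl))
end

section
/- Let T > 0 and Θ > 0, let θ : [0,T] → [0,Θ] be measurable, let α : [0,T] → [0,∞) be nondecreasing, and let u : [0,T] → [0,∞) be continuous and satisfy u(t) ≤ α(t) + ∫₀^t u(s) θ(s) exp( −∫_s^t θ(u') du' ) ds for all t ∈ [0,T]. Then u(t) ≤ α(t) (1 + Θ t) for all t ∈ [0,T]. -/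
/-!
Fix `t` and put `A = α t`, `F s = ∫₀^s θ`. The kernel `exp (-∫_r^s θ)` factorises as
`exp (-F s) * exp (F r)`, so, `α` being nondecreasing, on `[0, t]` the hypothesis gives
`u ≤ A + φ` with `φ = exp (-F) * ∫₀^· u θ exp F`. The function `φ` is absolutely continuous with
`φ' = θ (u - φ) ≤ A θ` almost everywhere, hence `φ t ≤ A F t ≤ A Θ t`.
-/

open MeasureTheory Set Real

theorem LipschitzOnWith.comp_absolutelyContinuousOnInterval {X Y : Type*} [PseudoMetricSpace X]
    [PseudoMetricSpace Y] {f : ℝ → X} {g : X → Y} {K : NNReal} {s : Set X} {a b : ℝ}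
    (hg : LipschitzOnWith K g s) (hf : AbsolutelyContinuousOnInterval f a b)
    (hfs : MapsTo f (uIcc a b) s) : AbsolutelyContinuousOnInterval (g ∘ f) a b := by
  rw [absolutelyContinuousOnInterval_iff] at hf ⊢
  intro ε hε
  obtain ⟨δ, hδ, hfδ⟩ := hf (ε / (K + 1)) (by positivity)
  refine ⟨δ, hδ, fun E hE hEδ => ?_⟩
  calc ∑ i ∈ Finset.range E.1, dist (g (f (E.2 i).1)) (g (f (E.2 i).2))
      ≤ ∑ i ∈ Finset.range E.1, K * dist (f (E.2 i).1) (f (E.2 i).2) := by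
        gcongr with i hi
        exact hg.dist_le_mul _ (hfs (hE.1 i hi).1) _ (hfs (hE.1 i hi).2)
    _ = K * ∑ i ∈ Finset.range E.1, dist (f (E.2 i).1) (f (E.2 i).2) := (Finset.mul_sum ..).symm
    _ ≤ K * (ε / (K + 1)) := by gcongr; exact (hfδ E hE hEδ).le
    _ < ε := by
      rw [mul_div_assoc', div_lt_iff₀ (by positivity)]
      nlinarith

theorem AbsolutelyContinuousOnInterval.exp {f : ℝ → ℝ} {a b : ℝ}
    (hf : AbsolutelyContinuousOnInterval f a b) :
    AbsolutelyContinuousOnInterval (fun x => Real.exp (f x)) a b := by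
  obtain ⟨C, hC⟩ := hf.exists_bound
  obtain ⟨K, hK⟩ := (contDiff_exp (n := 1)).contDiffOn.exists_lipschitzOnWith one_ne_zero
    (convex_Icc (-C) C) isCompact_Icc
  exact hK.comp_absolutelyContinuousOnInterval hf fun x hx => abs_le.1 (hC x hx)

theorem AbsolutelyContinuousOnInterval.sub_le_integral_of_deriv_le {f g : ℝ → ℝ} {a b : ℝ}
    (hab : a ≤ b) (hf : AbsolutelyContinuousOnInterval f a b)
    (hg : IntervalIntegrable g volume a b) (hfg : ∀ᵐ x, x ∈ Icc a b → deriv f x ≤ g x) :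
    f b - f a ≤ ∫ x in a..b, g x := by
  rw [← hf.integral_deriv_eq_sub]
  refine intervalIntegral.integral_mono_ae_restrict hab hf.intervalIntegrable_deriv hg ?_
  exact (ae_restrict_iff' measurableSet_Icc).2 hfg

theorem integral_mul_exp_neg_integral_eq {θ g : ℝ → ℝ} {a b s : ℝ}
    (hθ : IntervalIntegrable θ volume a b) (hs : s ∈ uIcc a b) :
    ∫ r in a..s, g r * exp (-∫ w in r..s, θ w) =
      exp (-∫ w in a..s, θ w) * ∫ r in a..s, g r * exp (∫ w in a..r, θ w) := by
  rw [← intervalIntegral.integral_const_mul]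
  refine intervalIntegral.integral_congr fun r hr => ?_
  have hsub : ∀ {c}, c ∈ uIcc a s → IntervalIntegrable θ volume a c := fun hc =>
    hθ.mono_set (uIcc_subset_uIcc left_mem_uIcc (uIcc_subset_uIcc left_mem_uIcc hs hc))
  rw [← intervalIntegral.integral_interval_sub_left (hsub right_mem_uIcc) (hsub hr), neg_sub,
    sub_eq_neg_add, exp_add]
  ring

theorem le_mul_one_add_integral_of_le_add_integral_exp_kernel {θ u : ℝ → ℝ} {a b A : ℝ}
    (hab : a ≤ b) (hθ : IntervalIntegrable θ volume a b) (hθ_nonneg : ∀ x ∈ Icc a b, 0 ≤ θ x)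
    (hu : ContinuousOn u (Icc a b))
    (hle : ∀ s ∈ Icc a b, u s ≤ A + ∫ r in a..s, u r * θ r * exp (-∫ w in r..s, θ w)) :
    u b ≤ A * (1 + ∫ w in a..b, θ w) := by
  set F := fun x => ∫ w in a..x, θ w
  set W := fun x => ∫ r in a..x, u r * θ r * exp (F r)
  set φ := fun x => exp (-F x) * W x
  rw [← uIcc_of_le hab] at hu hθ_nonneg hle
  have hF : AbsolutelyContinuousOnInterval F a b :=
    hθ.absolutelyContinuousOnInterval_intervalIntegral left_mem_uIcc
  have hg : IntervalIntegrable (fun r => u r * θ r * exp (F r)) volume a b :=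
    (hθ.continuousOn_mul hu).mul_continuousOn (continuous_exp.comp_continuousOn hF.continuousOn)
  have hφ : AbsolutelyContinuousOnInterval φ a b :=
    hF.fun_neg.exp.fun_mul (hg.absolutelyContinuousOnInterval_intervalIntegral left_mem_uIcc)
  have hu_le : ∀ x ∈ uIcc a b, u x ≤ A + φ x := fun x hx =>
    (hle x hx).trans_eq (by rw [integral_mul_exp_neg_integral_eq hθ hx])
  have hderiv : ∀ᵐ x, x ∈ Icc a b → deriv φ x ≤ A * θ x := by
    filter_upwards [hθ.ae_hasDerivAt_integral, hg.ae_hasDerivAt_integral] with x hFx hWx hx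
    rw [← uIcc_of_le hab] at hx
    have hφx : HasDerivAt φ (θ x * (u x - φ x)) x :=
      ((hFx hx a left_mem_uIcc).fun_neg.exp.fun_mul (hWx hx a left_mem_uIcc)).congr_deriv <| by
        simp only [φ, W, F, exp_neg]
        field_simp
        ring
    rw [hφx.deriv, mul_comm A]
    exact mul_le_mul_of_nonneg_left (by linarith [hu_le x hx]) (hθ_nonneg x hx)
  have hφb := hφ.sub_le_integral_of_deriv_le hab (hθ.const_mul A) hderiv
  have hφa : φ a = 0 := by simp [φ, W]
  rw [intervalIntegral.integral_const_mul, hφa, sub_zero] at hφb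
  linarith [hu_le b right_mem_uIcc]

theorem gronwall_weighted_kernel_general
    (T Θ : ℝ)
    (θ α u : ℝ → ℝ)
    (hθmeas : Measurable θ)
    (hθmem : ∀ s ∈ Set.Icc (0 : ℝ) T, θ s ∈ Set.Icc (0 : ℝ) Θ)
    (hαmono : MonotoneOn α (Set.Icc 0 T))
    (hαnonneg : ∀ s ∈ Set.Icc (0 : ℝ) T, 0 ≤ α s)
    (hu_cont : ContinuousOn u (Set.Icc 0 T))
    (hu_le : ∀ t ∈ Set.Icc (0 : ℝ) T,
      u t ≤ α t + ∫ s in (0 : ℝ)..t, u s * θ s * Real.exp (-∫ w in s..t, θ w)) :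
    ∀ t ∈ Set.Icc (0 : ℝ) T, u t ≤ α t * (1 + Θ * t) := by
  intro t ht
  have hsub : Icc 0 t ⊆ Icc 0 T := Icc_subset_Icc_right ht.2
  have hθ : IntervalIntegrable θ volume 0 t := by
    refine (intervalIntegrable_const (c := Θ)).mono_fun' hθmeas.aestronglyMeasurable
      ((ae_restrict_iff' measurableSet_uIoc).2 (.of_forall fun x hx => ?_))
    rw [uIoc_of_le ht.1] at hx
    obtain ⟨hθ0, hθΘ⟩ := hθmem x (hsub (Ioc_subset_Icc_self hx))
    exact (norm_of_nonneg hθ0).trans_le hθΘ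
  have hbound := le_mul_one_add_integral_of_le_add_integral_exp_kernel ht.1 hθ
    (fun x hx => (hθmem x (hsub hx)).1) (hu_cont.mono hsub) fun s hs =>
      (hu_le s (hsub hs)).trans (by gcongr; exact hαmono (hsub hs) ht hs.2)
  have hθ_int : ∫ w in 0..t, θ w ≤ Θ * t := by
    simpa [mul_comm] using intervalIntegral.integral_mono_on ht.1 hθ intervalIntegrable_const
      fun x hx => (hθmem x (hsub hx)).2
  exact hbound.trans (by gcongr; exact hαnonneg t ht)

/-- Gronwall-type estimate (A.9)–(A.10) of the paper: if
`u(t) ≤ α(t) + ∫₀^t u(s) θ(s) exp(−∫_s^t θ) ds` on `[0,T]` with `θ : [0,T] → [0,Θ]`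
measurable, `α` nondecreasing and nonnegative, and `u` continuous and nonnegative, then
`u(t) ≤ α(t)(1 + Θ t)` on `[0,T]`. -/
theorem gronwall_weighted_kernel
    (T Θ : ℝ) (hT : 0 < T) (hΘ : 0 < Θ)
    (θ α u : ℝ → ℝ)
    (hθmeas : Measurable θ)
    (hθmem : ∀ s ∈ Set.Icc (0 : ℝ) T, θ s ∈ Set.Icc (0 : ℝ) Θ)
    (hαmono : MonotoneOn α (Set.Icc 0 T))
    (hαnonneg : ∀ s ∈ Set.Icc (0 : ℝ) T, 0 ≤ α s)
    (hu_cont : ContinuousOn u (Set.Icc 0 T))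
    (hu_nonneg : ∀ s ∈ Set.Icc (0 : ℝ) T, 0 ≤ u s)
    (hu_le : ∀ t ∈ Set.Icc (0 : ℝ) T,
      u t ≤ α t + ∫ s in (0 : ℝ)..t, u s * θ s * Real.exp (-∫ w in s..t, θ w)) :
    ∀ t ∈ Set.Icc (0 : ℝ) T, u t ≤ α t * (1 + Θ * t) :=
  gronwall_weighted_kernel_general T Θ θ α u hθmeas hθmem hαmono hαnonneg hu_cont hu_le
end

section
/- Let (P(t))_{t≥0} be a Poisson process with rate μ > 0, let Θ > 0, and let S be an exponential random variable with rate λ > 0 independent of P. Then there exist constants c₀ > 0, c₁ > 0, and C₀ > 0 such that for all C ≥ C₀, P( P(S) · (1 + Θ S) ≥ C/2 ) ≤ c₀ (1 + √C) e^{−c₁ √C}. -/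
/-!
Put `R = √C` and `T = ε R`. On `{S ≤ T}` monotonicity gives `P(S)(1 + ΘS) ≤ P(T)(1 + ΘT)`, and
`1 + ΘT ≤ (1 + Θ)R`, so the event forces either `S > T`, of probability `e^{-λεR}`, or
`P(T) ≥ R / (2(1 + Θ))`. For `ε` small the Poisson mean `μεR` is at most `1/(2e)` times this
threshold, and then each Poisson weight `e^{-r} rⁿ/n! ≤ (e r/n)ⁿ` beyond it is at most `2⁻ⁿ`,
so the second probability is `O(2^{-R/(2(1+Θ))})`.
-/

open MeasureTheory

/-- A Poisson process with rate `μ`: a measurable counting process starting at `0`, with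
nondecreasing paths, independent increments, and increments over `[s,t]` Poisson
distributed with mean `μ(t−s)`. -/
def IsPoissonProcess {Ω : Type*} [MeasurableSpace Ω] (ℙ : Measure Ω)
    (P : ℝ → Ω → ℕ) (μ : ℝ) : Prop :=
  (∀ t, Measurable (P t)) ∧
  (∀ᵐ ω ∂ℙ, P 0 ω = 0) ∧
  (∀ᵐ ω ∂ℙ, ∀ s t : ℝ, 0 ≤ s → s ≤ t → P s ω ≤ P t ω) ∧
  (∀ (n : ℕ) (t : Fin (n + 1) → ℝ), 0 ≤ t 0 → Monotone t →
    ProbabilityTheory.iIndepFun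
      (fun i : Fin n => fun ω => P (t i.succ) ω - P (t i.castSucc) ω) ℙ) ∧
  (∀ s t : ℝ, 0 ≤ s → s ≤ t →
    Measure.map (fun ω => P t ω - P s ω) ℙ
      = ProbabilityTheory.poissonMeasure (Real.toNNReal (μ * (t - s))))

section

open Real Set ProbabilityTheory
open scoped NNReal Nat

lemma expMeasure_Ioi {r : ℝ} (hr : 0 < r) {t : ℝ} (ht : 0 ≤ t) :
    expMeasure r (Ioi t) = ENNReal.ofReal (exp (-(r * t))) := by
  have := isProbabilityMeasure_expMeasure hr
  have hle : exp (-(r * t)) ≤ 1 := exp_le_one_iff.2 (by nlinarith)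
  rw [← compl_Iic, prob_compl_eq_one_sub measurableSet_Iic, ← ofReal_cdf, cdf_expMeasure_eq hr,
    if_pos ht, ← ENNReal.ofReal_one, ← ENNReal.ofReal_sub _ (by linarith), sub_sub_cancel]

lemma ae_expMeasure_nonneg (r : ℝ) : ∀ᵐ x ∂expMeasure r, 0 ≤ x := by
  simp only [ae_iff, not_le]
  change expMeasure r (Iio 0) = 0
  rw [expMeasure, gammaMeasure, withDensity_apply _ measurableSet_Iio]
  exact lintegral_gammaPDF_of_nonpos le_rfl

lemma exp_neg_mul_pow_div_factorial_le_inv_two_pow {r : ℝ≥0} {n : ℕ}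
    (h : 2 * exp 1 * r ≤ n) : exp (-r) * r ^ n / n ! ≤ 2⁻¹ ^ n := by
  rcases n.eq_zero_or_pos with rfl | hn
  · simp
  have hn' : (0 : ℝ) < n := by exact_mod_cast hn
  have hfac : (n : ℝ) ^ n / n ! ≤ exp n := pow_div_factorial_le_exp _ hn'.le n
  calc exp (-r) * r ^ n / n ! ≤ r ^ n / n ! := by
        rw [mul_div_assoc]
        exact mul_le_of_le_one_left (by positivity) (exp_le_one_iff.2 (by simp))
    _ = (r / n) ^ n * ((n : ℝ) ^ n / n !) := by
        rw [div_pow]; field_simp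
    _ ≤ (r / n) ^ n * exp n := by gcongr
    _ = (exp 1 * r / n) ^ n := by
        rw [← exp_one_pow, ← mul_pow, mul_div_assoc, mul_comm]
    _ ≤ 2⁻¹ ^ n := by
        gcongr
        rw [div_le_iff₀ hn']
        linarith

lemma poissonMeasure_Ici_le {r : ℝ≥0} {m : ℕ} (h : 2 * exp 1 * r ≤ m) :
    poissonMeasure r (Ici m) ≤ ENNReal.ofReal (2 * 2⁻¹ ^ m) := by
  have hsum : Summable fun n : ℕ ↦ ite (m ≤ n) ((2 : ℝ)⁻¹ ^ n) 0 :=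
    summable_geometric_two.indicator (Ici m) |>.congr fun n ↦ by
      simp [Set.indicator_apply]
  rw [← tsum_geometric_inv_two_ge, ENNReal.ofReal_tsum_of_nonneg (fun n ↦ by positivity) hsum,
    ← Measure.tsum_indicator_apply_singleton _ _ measurableSet_Ici]
  refine ENNReal.tsum_le_tsum fun n ↦ ?_
  by_cases hmn : m ≤ n
  · rw [indicator_of_mem (mem_Ici.2 hmn), if_pos hmn, poissonMeasure_singleton]
    exact ENNReal.ofReal_le_ofReal <| exp_neg_mul_pow_div_factorial_le_inv_two_pow <|
      h.trans (by exact_mod_cast hmn)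
  · simp [hmn]

lemma poissonMeasure_tail_le {r : ℝ≥0} {x : ℝ} (h : 2 * exp 1 * r ≤ x) :
    poissonMeasure r {n | x ≤ n} ≤ ENNReal.ofReal (2 * exp (-(log 2 * x))) := by
  have hset : {n : ℕ | x ≤ n} = Ici ⌈x⌉₊ := by ext n; simp [Nat.ceil_le]
  rw [hset]
  refine (poissonMeasure_Ici_le (h.trans (Nat.le_ceil x))).trans (ENNReal.ofReal_le_ofReal ?_)
  have : (2 : ℝ)⁻¹ ^ ⌈x⌉₊ = exp (-(log 2 * ⌈x⌉₊)) := by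
    rw [← exp_log (by norm_num : (0:ℝ) < 2⁻¹), ← exp_nat_mul, log_inv]; ring_nf
  rw [this]
  gcongr
  exact Nat.le_ceil x

lemma IsPoissonProcess.map_eq_poissonMeasure {Ω : Type*} [MeasurableSpace Ω] {μ : Measure Ω}
    {P : ℝ → Ω → ℕ} {r : ℝ} (hP : IsPoissonProcess μ P r) {t : ℝ} (ht : 0 ≤ t) :
    μ.map (P t) = poissonMeasure (r * t).toNNReal := by
  obtain ⟨-, hP0, -, -, hlaw⟩ := hP
  rw [← sub_zero t, ← hlaw 0 t le_rfl ht]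
  exact Measure.map_congr (hP0.mono fun ω h ↦ by simp [h])

lemma measure_le_mul_one_add_mul_le_add {Ω : Type*} [MeasurableSpace Ω] {μ : Measure Ω}
    {N : ℝ → Ω → ℕ} {S : Ω → ℝ} {Θ a t : ℝ} (hΘ : 0 ≤ Θ)
    (hN : ∀ᵐ ω ∂μ, MonotoneOn (N · ω) (Ici 0)) (hS : ∀ᵐ ω ∂μ, 0 ≤ S ω) :
    μ {ω | a ≤ N (S ω) ω * (1 + Θ * S ω)}
      ≤ μ {ω | t < S ω} + μ {ω | a ≤ N t ω * (1 + Θ * t)} := by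
  refine (measure_mono_ae ?_).trans (measure_union_le _ _)
  filter_upwards [hN, hS] with ω hmono hSω hω
  rcases lt_or_ge t (S ω) with hlt | hle
  · exact Or.inl hlt
  · refine Or.inr (hω.trans (mul_le_mul ?_ (by gcongr) (by positivity) (by positivity)))
    exact_mod_cast hmono hSω (hSω.trans hle : 0 ≤ t) hle

lemma le_of_sq_div_two_le_mul_one_add {Θ ε R y : ℝ} (hΘ : 0 ≤ Θ) (hε : ε ≤ 1) (hR : 1 ≤ R)
    (hy : 0 ≤ y) (h : R ^ 2 / 2 ≤ y * (1 + Θ * (ε * R))) : (2 * (1 + Θ))⁻¹ * R ≤ y := by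
  have hle : 1 + Θ * (ε * R) ≤ (1 + Θ) * R := by
    nlinarith [mul_le_mul_of_nonneg_right hε (zero_le_one.trans hR)]
  have hRsq : R * R ≤ R * (2 * (1 + Θ) * y) := by
    nlinarith [mul_le_mul_of_nonneg_left hle hy]
  rw [inv_mul_eq_div, div_le_iff₀ (by positivity)]
  linarith [le_of_mul_le_mul_left hRsq (by positivity)]

lemma IsPoissonProcess.measure_le_at_exponential_time_le {Ω : Type*} [MeasurableSpace Ω]
    {μ : Measure Ω} {P : ℝ → Ω → ℕ} {r : ℝ} (hP : IsPoissonProcess μ P r) (hr : 0 ≤ r)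
    {S : Ω → ℝ} {lam : ℝ} (hlam : 0 < lam) (hS : Measurable S) (hS_exp : μ.map S = expMeasure lam)
    {Θ ε R : ℝ} (hΘ : 0 ≤ Θ) (hε : 0 ≤ ε) (hε₁ : ε ≤ 1) (hR : 1 ≤ R)
    (hεr : 2 * exp 1 * r * ε ≤ (2 * (1 + Θ))⁻¹) :
    μ {ω | R ^ 2 / 2 ≤ (P (S ω) ω : ℝ) * (1 + Θ * S ω)}
      ≤ ENNReal.ofReal (exp (-(lam * (ε * R))))
        + ENNReal.ofReal (2 * exp (-(log 2 * ((2 * (1 + Θ))⁻¹ * R)))) := by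
  set T := ε * R
  have hT : 0 ≤ T := by positivity
  have hS₀ : ∀ᵐ ω ∂μ, 0 ≤ S ω :=
    ae_of_ae_map hS.aemeasurable (hS_exp ▸ ae_expMeasure_nonneg lam)
  have hmono : ∀ᵐ ω ∂μ, MonotoneOn (P · ω) (Ici 0) :=
    hP.2.2.1.mono fun ω h s hs t _ hst ↦ h s t hs hst
  have hrate : 2 * exp 1 * (r * T).toNNReal ≤ (2 * (1 + Θ))⁻¹ * R := by
    rw [Real.coe_toNNReal _ (by positivity)]
    calc 2 * exp 1 * (r * T) = 2 * exp 1 * r * ε * R := by ring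
      _ ≤ (2 * (1 + Θ))⁻¹ * R := by gcongr
  calc μ {ω | R ^ 2 / 2 ≤ (P (S ω) ω : ℝ) * (1 + Θ * S ω)}
      ≤ μ {ω | T < S ω} + μ {ω | R ^ 2 / 2 ≤ (P T ω : ℝ) * (1 + Θ * T)} :=
        measure_le_mul_one_add_mul_le_add hΘ hmono hS₀
    _ ≤ μ.map S (Ioi T) + μ.map (P T) {n | (2 * (1 + Θ))⁻¹ * R ≤ n} := by
        rw [Measure.map_apply hS measurableSet_Ioi, Measure.map_apply (hP.1 T) .of_discrete]
        exact add_le_add le_rfl <| measure_mono fun ω hω ↦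
          le_of_sq_div_two_le_mul_one_add hΘ hε₁ hR (Nat.cast_nonneg _) hω
    _ ≤ _ := by
        rw [hS_exp, expMeasure_Ioi hlam hT, hP.map_eq_poissonMeasure hT]
        exact add_le_add le_rfl (poissonMeasure_tail_le hrate)

end

theorem poisson_at_exponential_time_tail_bound_general
    {Ω : Type*} [MeasurableSpace Ω] (ℙ : Measure Ω) [IsProbabilityMeasure ℙ]
    (P : ℝ → Ω → ℕ) (μ : ℝ) (hμ : 0 < μ) (hP : IsPoissonProcess ℙ P μ)
    (Θ : ℝ) (hΘ : 0 < Θ)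
    (lam : ℝ) (hlam : 0 < lam)
    (S : Ω → ℝ) (hS_meas : Measurable S)
    (hS_exp : Measure.map S ℙ = ProbabilityTheory.expMeasure lam) :
    ∃ c₀ > (0 : ℝ), ∃ c₁ > (0 : ℝ), ∃ C₀ > (0 : ℝ), ∀ C, C₀ ≤ C →
      ℙ {ω | C / 2 ≤ (P (S ω) ω : ℝ) * (1 + Θ * S ω)}
        ≤ ENNReal.ofReal (c₀ * (1 + Real.sqrt C) * Real.exp (-c₁ * Real.sqrt C)) := by
  set b := (2 * (1 + Θ))⁻¹
  set ε := min 1 (b / (2 * Real.exp 1 * μ))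
  set c₁ := min (lam * ε) (Real.log 2 * b)
  have hb : b ≤ 2⁻¹ := inv_anti₀ two_pos (by linarith)
  have hεb : 2 * Real.exp 1 * μ * ε ≤ b :=
    (le_div_iff₀' (by positivity)).1 (min_le_right 1 (b / (2 * Real.exp 1 * μ)))
  refine ⟨3, by norm_num, c₁, by positivity, b⁻¹ ^ 2, by positivity, fun C hC ↦ ?_⟩
  set R := Real.sqrt C
  have hbR : 1 ≤ b * R := (mul_inv_cancel₀ (by positivity)).ge.trans
    (mul_le_mul_of_nonneg_left (Real.le_sqrt_of_sq_le hC) (by positivity))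
  have hR : 1 ≤ R := by nlinarith [(by positivity : 0 < b)]
  have hCR : C = R ^ 2 := (Real.sq_sqrt ((sq_nonneg _).trans hC)).symm
  rw [hCR]
  refine (hP.measure_le_at_exponential_time_le hμ.le hlam hS_meas hS_exp hΘ.le (by positivity)
    (min_le_left _ _) hR hεb).trans ?_
  have hexp {a : ℝ} (ha : c₁ ≤ a) : Real.exp (-(a * R)) ≤ Real.exp (-c₁ * R) := by
    gcongr; linarith [mul_le_mul_of_nonneg_right ha (zero_le_one.trans hR)]
  rw [← ENNReal.ofReal_add (by positivity) (by positivity), ← mul_assoc, ← mul_assoc]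
  gcongr
  nlinarith [hexp (min_le_left _ _), hexp (min_le_right _ _), Real.exp_pos (-c₁ * R)]

/-- bound (A.12)–(A.13) of the paper: for a Poisson process `P` with rate
`μ > 0` and an independent exponential time `S` with rate `λ > 0`, the quantity
`P(S)(1 + Θ S)` has a stretched-exponential tail. -/
theorem poisson_at_exponential_time_tail_bound
    {Ω : Type*} [MeasurableSpace Ω] (ℙ : Measure Ω) [IsProbabilityMeasure ℙ]
    (P : ℝ → Ω → ℕ) (μ : ℝ) (hμ : 0 < μ) (hP : IsPoissonProcess ℙ P μ)
    (Θ : ℝ) (hΘ : 0 < Θ)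
    (lam : ℝ) (hlam : 0 < lam)
    (S : Ω → ℝ) (hS_meas : Measurable S)
    (hS_exp : Measure.map S ℙ = ProbabilityTheory.expMeasure lam)
    (hS_indep : ProbabilityTheory.IndepFun S (fun ω => fun t : ℝ => P t ω) ℙ) :
    ∃ c₀ > (0 : ℝ), ∃ c₁ > (0 : ℝ), ∃ C₀ > (0 : ℝ), ∀ C, C₀ ≤ C →
      ℙ {ω | C / 2 ≤ (P (S ω) ω : ℝ) * (1 + Θ * S ω)}
        ≤ ENNReal.ofReal (c₀ * (1 + Real.sqrt C) * Real.exp (-c₁ * Real.sqrt C)) :=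
  poisson_at_exponential_time_tail_bound_general ℙ P μ hμ hP Θ hΘ lam hlam S hS_meas hS_exp
end

section
/- Let ε > 0, let K be a nonnegative integer, let s > 0, and let s₁, …, s_{K+1} be reals with s_k ≥ s for every k. Let (x_k)_{k=0}^{K+1}, (x̄_k)_{k=0}^{K+1} and (μ_k)_{k=1}^{K+1} be real sequences such that: x₀ = x̄₀; |x_k − μ_{k+1}| ≤ K + 1 for all 0 ≤ k ≤ K; x_{k+1} = x_k e^{−s_{k+1}/ε} + μ_{k+1} (1 − e^{−s_{k+1}/ε}) for all 0 ≤ k ≤ K; and |μ_{k+1} − x̄_{k+1}| ≤ max_{0≤j≤k} |x_j − x̄_j| for all 0 ≤ k ≤ K. Then |x_{K+1} − x̄_{K+1}| ≤ (K+1)² e^{−s/ε}. In particular, |x_{K+1} − x̄_{K+1}| → 0 as ε → 0 with all other data fixed. -/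
open Filter Topology

/-!
Subtracting `x̄_{k+1}` from the relaxation step splits the error into a relaxation part
`(x_k - μ_{k+1}) e^{-s_{k+1}/ε}`, of size at most `(K+1) e^{-s/ε}`, and the target error
`μ_{k+1} - x̄_{k+1}`, bounded by the largest earlier error. Each step therefore adds at most
`(K+1) e^{-s/ε}` to the error, which starts at `0`, so after `K+1` steps it is at most
`(K+1)² e^{-s/ε}`; this tends to `0` as `ε → 0⁺`.
-/

lemma abs_relax_sub_le {a m b q : ℝ} (hq : 0 ≤ q) :
    |a * q + m * (1 - q) - b| ≤ |a - m| * q + |m - b| := by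
  calc |a * q + m * (1 - q) - b| = |(a - m) * q + (m - b)| := by ring_nf
    _ ≤ |(a - m) * q| + |m - b| := abs_add_le _ _
    _ = |a - m| * q + |m - b| := by rw [abs_mul, abs_of_nonneg hq]

lemma abs_sub_le_mul_of_relaxation {K : ℕ} {M δ : ℝ} {q x xb μ : ℕ → ℝ}
    (hq : ∀ k ≤ K, 0 ≤ q (k + 1)) (hqδ : ∀ k ≤ K, q (k + 1) ≤ δ)
    (h0 : x 0 = xb 0) (hbound : ∀ k ≤ K, |x k - μ (k + 1)| ≤ M)
    (hrec : ∀ k ≤ K, x (k + 1) = x k * q (k + 1) + μ (k + 1) * (1 - q (k + 1)))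
    (hμ : ∀ k ≤ K, |μ (k + 1) - xb (k + 1)|
      ≤ (Finset.range (k + 1)).sup' Finset.nonempty_range_add_one (fun j => |x j - xb j|)) :
    ∀ k ≤ K + 1, |x k - xb k| ≤ k * (M * δ) := by
  intro k
  induction k using Nat.strong_induction_on with
  | _ k ih =>
    intro hk
    rcases k with _ | n
    · simp [h0]
    have hn : n ≤ K := by omega
    have hM : 0 ≤ M := (abs_nonneg _).trans (hbound n hn)
    have hMδ : 0 ≤ M * δ := mul_nonneg hM ((hq n hn).trans (hqδ n hn))
    have hrelax : |x n - μ (n + 1)| * q (n + 1) ≤ M * δ :=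
      mul_le_mul (hbound n hn) (hqδ n hn) (hq n hn) hM
    have hsup : (Finset.range (n + 1)).sup' Finset.nonempty_range_add_one
        (fun j => |x j - xb j|) ≤ n * (M * δ) := by
      refine Finset.sup'_le _ _ fun j hj => ?_
      have hjn : j ≤ n := Nat.lt_succ_iff.mp (Finset.mem_range.mp hj)
      calc |x j - xb j| ≤ j * (M * δ) := ih j (by omega) (by omega)
        _ ≤ n * (M * δ) := by gcongr
    calc |x (n + 1) - xb (n + 1)|
        ≤ |x n - μ (n + 1)| * q (n + 1) + |μ (n + 1) - xb (n + 1)| := by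
          rw [hrec n hn]; exact abs_relax_sub_le (hq n hn)
      _ ≤ M * δ + n * (M * δ) := add_le_add hrelax ((hμ n hn).trans hsup)
      _ = ((n + 1 : ℕ) : ℝ) * (M * δ) := by push_cast; ring

lemma Real.tendsto_exp_neg_div_nhdsGT_zero {s : ℝ} (hs : 0 < s) :
    Tendsto (fun ε => Real.exp (-s / ε)) (𝓝[>] 0) (𝓝 0) := by
  have hdiv : Tendsto (fun ε : ℝ => -s / ε) (𝓝[>] 0) atBot := by
    simpa [div_eq_mul_inv] using tendsto_inv_nhdsGT_zero.const_mul_atTop_of_neg (neg_lt_zero.2 hs)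
  exact Real.tendsto_exp_atBot.comp hdiv

/-- core estimate in the proof of Proposition 4.2 of the paper: a
deterministic recursion, in which `x` relaxes exponentially at rate `1/ε` toward targets
`μ` and `x̄` is the instantaneous-relaxation jump process, satisfies
`|x_{K+1} − x̄_{K+1}| ≤ (K+1)² e^{−s/ε}`; in particular the difference tends to `0` as
`ε → 0⁺` with all other data fixed.  The sequences are parametrized by `ε`. -/
theorem relaxation_recursion_estimate
    (K : ℕ) (s : ℝ) (hs : 0 < s)
    (sk : ℕ → ℝ) (hsk : ∀ k, 1 ≤ k → k ≤ K + 1 → s ≤ sk k)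
    (x xb μ : ℝ → ℕ → ℝ)
    (h0 : ∀ ε > (0 : ℝ), x ε 0 = xb ε 0)
    (hbound : ∀ ε > (0 : ℝ), ∀ k ≤ K, |x ε k - μ ε (k + 1)| ≤ (K : ℝ) + 1)
    (hrec : ∀ ε > (0 : ℝ), ∀ k ≤ K,
      x ε (k + 1) = x ε k * Real.exp (-(sk (k + 1)) / ε)
        + μ ε (k + 1) * (1 - Real.exp (-(sk (k + 1)) / ε)))
    (hμ : ∀ ε > (0 : ℝ), ∀ k ≤ K,
      |μ ε (k + 1) - xb ε (k + 1)|
        ≤ (Finset.range (k + 1)).sup' Finset.nonempty_range_add_one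
            (fun j => |x ε j - xb ε j|)) :
    (∀ ε > (0 : ℝ),
        |x ε (K + 1) - xb ε (K + 1)| ≤ ((K : ℝ) + 1) ^ 2 * Real.exp (-s / ε)) ∧
      Tendsto (fun ε => |x ε (K + 1) - xb ε (K + 1)|)
        (nhdsWithin 0 (Set.Ioi 0)) (nhds 0) := by
  have hmain : ∀ ε > (0 : ℝ),
      |x ε (K + 1) - xb ε (K + 1)| ≤ ((K : ℝ) + 1) ^ 2 * Real.exp (-s / ε) := by
    intro ε hε
    refine (abs_sub_le_mul_of_relaxation (δ := Real.exp (-s / ε))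
      (q := fun k => Real.exp (-(sk k) / ε))
      (fun k _ => (Real.exp_pos _).le)
      (fun k hk => by gcongr; exact hsk (k + 1) (by omega) (by omega))
      (h0 ε hε) (hbound ε hε) (hrec ε hε) (hμ ε hε) (K + 1) le_rfl).trans_eq ?_
    push_cast; ring
  have hlim : Tendsto (fun ε => ((K : ℝ) + 1) ^ 2 * Real.exp (-s / ε)) (𝓝[>] 0) (𝓝 0) := by
    simpa using (Real.tendsto_exp_neg_div_nhdsGT_zero hs).const_mul (((K : ℝ) + 1) ^ 2)
  exact ⟨hmain, squeeze_zero' (Eventually.of_forall fun ε => abs_nonneg _)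
    (eventually_mem_nhdsWithin.mono hmain) hlim⟩
end

section
/- Let M ≥ 1 be an integer and let λ_on(0), …, λ_on(M−1) and λ_off(1), …, λ_off(M) be positive reals, with Q̃ the associated (M+1)×(M+1) birth–death generator and Q the M×M matrix obtained by deleting its row and column indexed by 0. Let p = (p₀, …, p_M) be a probability vector with p Q̃ = 0 and let t ∈ ℝ^M solve Qᵀ t = −e₁. Then 𝟙ᵀ t = (1 − p₀) / (M λ_on(0) p₀), where 𝟙 ∈ ℝ^M is the all-ones vector. -/
open Matrix

/-- The birth–death generator `Q̃ ∈ ℝ^{(M+1)×(M+1)}`, indexed by `{0,…,M}`: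
`Q̃_{m,m+1} = (M−m)·lon m`, `Q̃_{m,m−1} = m·loff m`, all other off-diagonal entries
zero, and diagonal entries chosen so each row sums to zero. -/
noncomputable def birthDeathGenerator (M : ℕ) (lon loff : ℕ → ℝ) :
    Matrix (Fin (M + 1)) (Fin (M + 1)) ℝ := fun i j =>
  if (j : ℕ) = (i : ℕ) + 1 then ((M : ℝ) - (i : ℕ)) * lon (i : ℕ)
  else if (j : ℕ) + 1 = (i : ℕ) then ((i : ℕ) : ℝ) * loff (i : ℕ)
  else if j = i then -(((M : ℝ) - (i : ℕ)) * lon (i : ℕ) + ((i : ℕ) : ℝ) * loff (i : ℕ))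
  else 0

/-- The `M×M` matrix obtained from `Q̃` by deleting the row and column indexed by `0`. -/
noncomputable def birthDeathGeneratorDel (M : ℕ) (lon loff : ℕ → ℝ) :
    Matrix (Fin M) (Fin M) ℝ := fun i j =>
  birthDeathGenerator M lon loff i.succ j.succ

/-- ℕ-indexed version of the generator entries. -/
noncomputable def bdEn (M : ℕ) (lon loff : ℕ → ℝ) : ℕ → ℕ → ℝ := fun i j =>
  if j = i + 1 then ((M : ℝ) - i) * lon i
  else if j + 1 = i then (i : ℝ) * loff i
  else if j = i then -(((M : ℝ) - i) * lon i + (i : ℝ) * loff i)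
  else 0

lemma bdGen_eq (M : ℕ) (lon loff : ℕ → ℝ) (i j : Fin (M + 1)) :
    birthDeathGenerator M lon loff i j = bdEn M lon loff (i : ℕ) (j : ℕ) := by
  simp only [birthDeathGenerator, bdEn, Fin.ext_iff]

lemma bdEn_zero (M : ℕ) (lon loff : ℕ → ℝ) (s : ℕ) (hs : 1 ≤ s)
    (r : ℕ) (h1 : r ≠ s - 1) (h2 : r ≠ s) (h3 : r ≠ s + 1) :
    bdEn M lon loff r s = 0 := by
  simp only [bdEn]
  rw [if_neg (by omega), if_neg (by omega), if_neg (by omega)]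

/-- Sum of an essentially-tridiagonal column. -/
lemma sum_tri (a b s : ℕ) (hs : 1 ≤ s) (F : ℕ → ℝ)
    (hF : ∀ r, r ≠ s - 1 → r ≠ s → r ≠ s + 1 → F r = 0)
    (hout : ∀ r, r ∉ Finset.Ico a b → F r = 0) :
    ∑ r ∈ Finset.Ico a b, F r = F (s - 1) + F s + F (s + 1) := by
  classical
  have h1 : ∑ r ∈ Finset.Ico a b, F r
      = ∑ r ∈ Finset.Ico a b ∩ ({s - 1, s, s + 1} : Finset ℕ), F r := by
    refine (Finset.sum_subset Finset.inter_subset_left ?_).symm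
    intro x hx hx'
    refine hF x ?_ ?_ ?_ <;> intro h <;>
      exact hx' (Finset.mem_inter.mpr ⟨hx, by simp [h]⟩)
  have h2 : ∑ r ∈ ({s - 1, s, s + 1} : Finset ℕ), F r
      = ∑ r ∈ Finset.Ico a b ∩ ({s - 1, s, s + 1} : Finset ℕ), F r := by
    refine (Finset.sum_subset Finset.inter_subset_right ?_).symm
    intro x hx hx'
    exact hout x (fun h => hx' (Finset.mem_inter.mpr ⟨h, hx⟩))
  rw [h1, ← h2]
  rw [Finset.sum_insert (by simp; omega), Finset.sum_insert (by simp),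
    Finset.sum_singleton]
  ring

/-- Extension of a `Fin (M+1)`-vector by zero. -/
noncomputable def bdP (M : ℕ) (p : Fin (M + 1) → ℝ) : ℕ → ℝ := fun r =>
  if h : r ≤ M then p ⟨r, Nat.lt_succ_of_le h⟩ else 0

/-- Extension of a `Fin M`-vector (indexed by states `1..M`) by zero. -/
noncomputable def bdT (M : ℕ) (t : Fin M → ℝ) : ℕ → ℝ := fun r =>
  if h : 1 ≤ r ∧ r ≤ M then t ⟨r - 1, by omega⟩ else 0

/-- if `p` is a probability vector with `p Q̃ = 0` and `t` solves
`Qᵀ t = −e₁`, then `𝟙ᵀ t = (1 − p₀) / (M·lon(0)·p₀)`. -/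
theorem birthDeath_expected_runtime_formula
    (M : ℕ) (hM : 1 ≤ M) (lon loff : ℕ → ℝ)
    (hlon : ∀ m, m ≤ M - 1 → 0 < lon m)
    (hloff : ∀ m, 1 ≤ m → m ≤ M → 0 < loff m)
    (p : Fin (M + 1) → ℝ)
    (hp_nonneg : ∀ i, 0 ≤ p i) (hp_sum : ∑ i, p i = 1)
    (hp_stat : Matrix.vecMul p (birthDeathGenerator M lon loff) = 0)
    (t : Fin M → ℝ)
    (ht : Matrix.mulVec (birthDeathGeneratorDel M lon loff)ᵀ t
        = -(Pi.single (⟨0, by omega⟩ : Fin M) 1)) :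
    ∑ i, t i = (1 - p 0) / ((M : ℝ) * lon 0 * p 0) := by
  classical
  set c : ℝ := (M : ℝ) * lon 0 * p 0 with hc
  set P : ℕ → ℝ := bdP M p with hP
  set T : ℕ → ℝ := bdT M t with hT
  set E : ℕ → ℕ → ℝ := bdEn M lon loff with hE
  -- basic evaluation facts
  have hPval : ∀ i : Fin (M + 1), P (i : ℕ) = p i := by
    intro i
    simp only [hP, bdP]
    rw [dif_pos (by omega)]
  have hP0 : P 0 = p 0 := hPval 0
  have hPout : ∀ r, M < r → P r = 0 := by
    intro r hr; simp only [hP, bdP]; rw [dif_neg (by omega)]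
  have hTval : ∀ i : Fin M, T ((i : ℕ) + 1) = t i := by
    intro i
    simp only [hT, bdT]
    rw [dif_pos (by omega)]
    exact congrArg t (Fin.ext (by simp))
  have hTout : ∀ r, ¬(1 ≤ r ∧ r ≤ M) → T r = 0 := by
    intro r hr; simp only [hT, bdT]; rw [dif_neg hr]
  -- entry evaluations for a column 1 ≤ s
  have hEb : ∀ s, 1 ≤ s → E (s - 1) s = ((M : ℝ) - (s - 1 : ℕ)) * lon (s - 1) := by
    intro s hs; simp only [hE, bdEn]; rw [if_pos (by omega)]
  have hEdiag : ∀ s : ℕ, E s s = -(((M : ℝ) - s) * lon s + (s : ℝ) * loff s) := by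
    intro s; simp only [hE, bdEn]
    rw [if_neg (by omega), if_neg (by omega)]
    simp
  have hEd : ∀ s : ℕ, E (s + 1) s = ((s + 1 : ℕ) : ℝ) * loff (s + 1) := by
    intro s; simp only [hE, bdEn]
    rw [if_neg (by omega)]
    simp
  have hEz : ∀ s, 1 ≤ s → ∀ r, r ≠ s - 1 → r ≠ s → r ≠ s + 1 → E r s = 0 := by
    intro s hs r h1 h2 h3
    rw [hE]
    exact bdEn_zero M lon loff s hs r h1 h2 h3
  -- column equations for t (from ht)
  have ht' : Matrix.vecMul t (birthDeathGeneratorDel M lon loff)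
      = -(Pi.single (⟨0, by omega⟩ : Fin M) 1) := by
    rw [← Matrix.mulVec_transpose]; exact ht
  have colT : ∀ s, 1 ≤ s → s ≤ M →
      T (s - 1) * E (s - 1) s + T s * E s s + T (s + 1) * E (s + 1) s
        = -(if s = 1 then (1 : ℝ) else 0) := by
    intro s hs1 hs2
    have hj : (s - 1) < M := by omega
    have h1 := congrFun ht' ⟨s - 1, hj⟩
    have hLHS : Matrix.vecMul t (birthDeathGeneratorDel M lon loff) ⟨s - 1, hj⟩
        = ∑ k ∈ Finset.Ico 1 (M + 1), T k * E k s := by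
      simp only [Matrix.vecMul, dotProduct, birthDeathGeneratorDel]
      have heq : ∀ i : Fin M,
          t i * birthDeathGenerator M lon loff i.succ (⟨s - 1, hj⟩ : Fin M).succ
            = T ((i : ℕ) + 1) * E ((i : ℕ) + 1) s := by
        intro i
        have e2 : (((⟨s - 1, hj⟩ : Fin M).succ : Fin (M + 1)) : ℕ) = s := by
          simp [Fin.val_succ]; omega
        rw [bdGen_eq, hTval, Fin.val_succ, e2, hE]
      rw [Finset.sum_congr rfl (fun i _ => heq i)]
      rw [Fin.sum_univ_eq_sum_range (fun k => T (k + 1) * E (k + 1) s) M]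
      rw [Finset.sum_Ico_eq_sum_range]
      simp only [add_comm 1]
      norm_num
    have hRHS : (-(Pi.single (⟨0, by omega⟩ : Fin M) 1) : Fin M → ℝ) ⟨s - 1, hj⟩
        = -(if s = 1 then (1 : ℝ) else 0) := by
      simp only [Pi.neg_apply, Pi.single_apply]
      congr 1
      by_cases h : s = 1
      · subst h; simp
      · rw [if_neg (by simp [Fin.ext_iff]; omega), if_neg h]
    have hsum := sum_tri 1 (M + 1) s hs1 (fun k => T k * E k s)
      (fun r h1 h2 h3 => by
        show T r * E r s = 0
        rw [hEz s hs1 r h1 h2 h3, mul_zero])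
      (fun r hr => by
        show T r * E r s = 0
        rw [hTout r (by simp at hr; omega), zero_mul])
    rw [hLHS, hRHS, hsum] at h1
    exact h1
  -- column equations for p (from hp_stat)
  have colP : ∀ s, 1 ≤ s → s ≤ M →
      P (s - 1) * E (s - 1) s + P s * E s s + P (s + 1) * E (s + 1) s = 0 := by
    intro s hs1 hs2
    have hj : s < M + 1 := by omega
    have h1 := congrFun hp_stat ⟨s, hj⟩
    have hLHS : Matrix.vecMul p (birthDeathGenerator M lon loff) ⟨s, hj⟩
        = ∑ k ∈ Finset.Ico 0 (M + 1), P k * E k s := by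
      simp only [Matrix.vecMul, dotProduct]
      have heq : ∀ i : Fin (M + 1),
          p i * birthDeathGenerator M lon loff i ⟨s, hj⟩
            = P (i : ℕ) * E (i : ℕ) s := by
        intro i
        rw [bdGen_eq, hPval, hE]
      rw [Finset.sum_congr rfl (fun i _ => heq i)]
      rw [Fin.sum_univ_eq_sum_range (fun k => P k * E k s) (M + 1)]
      rw [← Finset.range_eq_Ico]
    have hsum := sum_tri 0 (M + 1) s hs1 (fun k => P k * E k s)
      (fun r h1 h2 h3 => by
        show P r * E r s = 0
        rw [hEz s hs1 r h1 h2 h3, mul_zero])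
      (fun r hr => by
        show P r * E r s = 0
        rw [hPout r (by simp at hr; omega), zero_mul])
    rw [hLHS, hsum] at h1
    simpa using h1
  -- restricted stationary vector Qv (p without p₀) and W := Qv - c T
  set Qv : ℕ → ℝ := fun r => if 1 ≤ r then P r else 0 with hQv
  have hQv0 : Qv 0 = 0 := by simp [hQv]
  have hQvpos : ∀ r, 1 ≤ r → Qv r = P r := by
    intro r hr; simp only [hQv]; rw [if_pos hr]
  have colQ : ∀ s, 1 ≤ s → s ≤ M →
      Qv (s - 1) * E (s - 1) s + Qv s * E s s + Qv (s + 1) * E (s + 1) s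
        = -(if s = 1 then c else 0) := by
    intro s hs1 hs2
    have hcol := colP s hs1 hs2
    by_cases h : s = 1
    · subst h
      have hE0 : E 0 1 = (M : ℝ) * lon 0 := by
        simp only [hE, bdEn]
        norm_num
      rw [show (1 : ℕ) - 1 = 0 from rfl, hE0, hP0] at hcol
      rw [show (1 : ℕ) - 1 = 0 from rfl, hQv0,
        hQvpos 1 (by norm_num), hQvpos 2 (by norm_num), if_pos rfl, hc]
      linear_combination hcol
    · rw [if_neg h, hQvpos (s - 1) (by omega), hQvpos s (by omega),
        hQvpos (s + 1) (by omega)]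
      simpa using hcol
  set W : ℕ → ℝ := fun r => Qv r - c * T r with hW
  have colW : ∀ s, 1 ≤ s → s ≤ M →
      W (s - 1) * E (s - 1) s + W s * E s s + W (s + 1) * E (s + 1) s = 0 := by
    intro s hs1 hs2
    have h1 := colQ s hs1 hs2
    have h2 := colT s hs1 hs2
    simp only [hW]
    by_cases h : s = 1
    · rw [if_pos h] at h1 h2
      linear_combination h1 - c * h2
    · rw [if_neg h] at h1 h2
      linear_combination h1 - c * h2
  -- flux function and telescoping
  set B : ℕ → ℝ := fun s => ((M : ℝ) - s) * lon s with hB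
  set D : ℕ → ℝ := fun s => (s : ℝ) * loff s with hD
  have colW' : ∀ s, 1 ≤ s → s ≤ M →
      W (s - 1) * B (s - 1) - W s * (B s + D s) + W (s + 1) * D (s + 1) = 0 := by
    intro s hs1 hs2
    have h1 := colW s hs1 hs2
    rw [hEb s hs1, hEdiag s, hEd s] at h1
    simp only [hB, hD]
    push_cast at h1 ⊢
    linear_combination h1
  set F : ℕ → ℝ := fun s => W (s - 1) * B (s - 1) - W s * D s with hF
  have hFstep : ∀ s, 1 ≤ s → s ≤ M → F s = F (s + 1) := by
    intro s hs1 hs2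
    have h1 := colW' s hs1 hs2
    simp only [hF]
    simp only [Nat.add_sub_cancel]
    linear_combination h1
  have hWtop : W (M + 1) = 0 := by
    simp only [hW, hQv]
    rw [if_pos (by omega), hPout (M + 1) (by omega), hTout (M + 1) (by omega)]
    ring
  have hFtop : F (M + 1) = 0 := by
    simp only [hF, Nat.add_sub_cancel, hWtop]
    have : B M = 0 := by simp [hB]
    rw [this]
    ring
  have hFzero : ∀ k, k ≤ M → F (M + 1 - k) = 0 := by
    intro k
    induction k with
    | zero => intro _; simpa using hFtop
    | succ n ih =>
      intro hn
      have h1 : M + 1 - (n + 1) = M - n := by omega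
      have h2 : 1 ≤ M - n := by omega
      have h3 : M - n ≤ M := by omega
      rw [h1, hFstep (M - n) h2 h3]
      have h4 : M - n + 1 = M + 1 - n := by omega
      rw [h4]
      exact ih (by omega)
  have hFall : ∀ s, 1 ≤ s → s ≤ M + 1 → F s = 0 := by
    intro s hs1 hs2
    have := hFzero (M + 1 - s) (by omega)
    rwa [show M + 1 - (M + 1 - s) = s by omega] at this
  -- W vanishes
  have hW0 : W 0 = 0 := by
    simp only [hW, hQv]
    rw [if_neg (by omega), hTout 0 (by omega)]
    ring
  have hWall : ∀ s, s ≤ M → W s = 0 := by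
    intro s
    induction s with
    | zero => intro _; exact hW0
    | succ n ih =>
      intro hn
      have hFn := hFall (n + 1) (by omega) (by omega)
      simp only [hF, Nat.add_sub_cancel] at hFn
      rw [ih (by omega)] at hFn
      have hD1 : D (n + 1) ≠ 0 := by
        simp only [hD]
        have := hloff (n + 1) (by omega) (by omega)
        positivity
      have : W (n + 1) * D (n + 1) = 0 := by linarith
      exact (mul_eq_zero.mp this).resolve_right hD1
  -- conclude: p s = c * t (s-1) for 1 ≤ s ≤ M
  have hpt : ∀ s, 1 ≤ s → s ≤ M → P s = c * T s := by
    intro s hs1 hs2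
    have := hWall s hs2
    simp only [hW, hQv, if_pos hs1] at this
    linarith
  -- sum up
  have h1 : ∑ i : Fin (M + 1), p i = ∑ k ∈ Finset.range (M + 1), P k := by
    rw [← Fin.sum_univ_eq_sum_range (fun k => P k) (M + 1)]
    exact Finset.sum_congr rfl (fun i _ => (hPval i).symm)
  have h2 : ∑ k ∈ Finset.range (M + 1), P k
      = (∑ k ∈ Finset.range M, P (k + 1)) + P 0 := Finset.sum_range_succ' _ M
  have h3 : ∑ k ∈ Finset.range M, P (k + 1)
      = c * ∑ i : Fin M, t i := by
    rw [Finset.sum_congr rfl (fun k hk => hpt (k + 1) (by omega)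
      (by simp at hk; omega))]
    rw [← Finset.mul_sum]
    congr 1
    rw [← Fin.sum_univ_eq_sum_range (fun k => T (k + 1)) M]
    exact Finset.sum_congr rfl (fun i _ => hTval i)
  have hkey : (1 : ℝ) = c * (∑ i, t i) + p 0 := by
    rw [← hp_sum, h1, h2, h3, hP0]
  have hp0 : p 0 ≠ 0 := by
    intro h
    rw [h] at hkey
    rw [hc, h] at hkey
    simp at hkey
  have hlon0 : lon 0 ≠ 0 := ne_of_gt (hlon 0 (by omega))
  have hcne : c ≠ 0 := by
    rw [hc]
    have hMne : (M : ℝ) ≠ 0 := by positivity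
    exact mul_ne_zero (mul_ne_zero hMne hlon0) hp0
  rw [hc] at hkey hcne ⊢
  field_simp
  linarith [hkey]
end

section
/- Let λ_on(0), λ_on(1), λ_off(2), λ_step(1), λ_step(2) be positive reals and set λ_off(1) = 1. Let Q̃ be the birth–death generator for M = 2 (a 3×3 matrix indexed by {0,1,2} with up rates 2λ_on(0) from 0 and λ_on(1) from 1, and down rates 1 from 1 and 2λ_off(2) from 2), let Q be the 2×2 matrix obtained by deleting the row and column indexed by 0, let p = (p₀, p₁, p₂) be a probability vector with p Q̃ = 0, and let t = (t₁, t₂) solve Qᵀ t = −e₁. Then ( 1/(2 λ_on(0)) + t₁ + t₂ ) · ( λ_step(1) p₁ + λ_step(2) p₂ ) = λ_step(1) + λ_on(1) λ_step(2) / ( 2 λ_off(2) ). -/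
open Matrix

/-- expected run length formula for `M = 2` motors, in dimensionless
units where `loff1 = 1`.  `Qt` is the birth–death generator on `{0,1,2}`, `Q` the
matrix obtained by deleting the row and column indexed by `0`, `p` a probability
vector with `p Qt = 0`, and `t` solves `Qᵀ t = −e₁`.  Then the run-length identity
(equation (4.14) of the paper) holds. -/
theorem run_length_two_motors
    (lon0 lon1 loff2 lstep1 lstep2 : ℝ)
    (hon0 : 0 < lon0) (hon1 : 0 < lon1) (hoff2 : 0 < loff2)
    (hstep1 : 0 < lstep1) (hstep2 : 0 < lstep2)
    (Qt : Matrix (Fin 3) (Fin 3) ℝ)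
    (hQt : Qt = !![-(2 * lon0), 2 * lon0, 0;
                   1, -(1 + lon1), lon1;
                   0, 2 * loff2, -(2 * loff2)])
    (Q : Matrix (Fin 2) (Fin 2) ℝ)
    (hQ : Q = !![-(1 + lon1), lon1;
                 2 * loff2, -(2 * loff2)])
    (p : Fin 3 → ℝ)
    (hp_nonneg : ∀ i, 0 ≤ p i) (hp_sum : ∑ i, p i = 1)
    (hp_stat : Matrix.vecMul p Qt = 0)
    (t : Fin 2 → ℝ)
    (ht : Matrix.mulVec Qᵀ t = -(Pi.single 0 1)) :
    (1 / (2 * lon0) + t 0 + t 1) * (lstep1 * p 1 + lstep2 * p 2)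
      = lstep1 + lon1 * lstep2 / (2 * loff2) := by
  subst hQt hQ
  have e0 := congrFun hp_stat 0
  have e2 := congrFun hp_stat 2
  have f0 := congrFun ht 0
  have f1 := congrFun ht 1
  simp [Matrix.vecMul, Matrix.mulVec, dotProduct, Fin.sum_univ_three,
    Fin.sum_univ_two, Pi.single_apply] at e0 e2 f0 f1
  rw [Fin.sum_univ_three] at hp_sum
  have ht0 : t 0 = 1 := by nlinarith [f0, f1]
  have ht1 : t 1 = lon1 / (2 * loff2) := by
    field_simp
    nlinarith [f0, f1]
  have hp1' : p 0 = p 1 / (2 * lon0) := by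
    field_simp
    linarith [e0]
  have hp2' : p 2 = lon1 * p 1 / (2 * loff2) := by
    field_simp
    linarith [e2]
  have hA : (1 / (2 * lon0) + 1 + lon1 / (2 * loff2)) * p 1 = 1 := by
    linear_combination hp_sum - hp1' - hp2'
  rw [ht0, ht1, hp2']
  linear_combination (lstep1 + lon1 * lstep2 / (2 * loff2)) * hA
end

section
/- Let λ_on(0), λ_on(1), λ_on(2), λ_off(1), λ_off(2), λ_off(3), λ_step(1), λ_step(2), λ_step(3) be positive reals, and let Q̃ be the birth–death generator for M = 3 (a 4×4 matrix indexed by {0,1,2,3} with up rates 3λ_on(0) from 0, 2λ_on(1) from 1, λ_on(2) from 2, and down rates λ_off(1) from 1, 2λ_off(2) from 2, 3λ_off(3) from 3). Then any probability vector p = (p₀, p₁, p₂, p₃) with p Q̃ = 0 satisfies ( λ_step(1) p₁ + λ_step(2) p₂ + λ_step(3) p₃ ) / ( p₁ + p₂ + p₃ ) = ( 3 λ_off(3) [ λ_off(2) λ_step(1) + λ_on(1) λ_step(2) ] + λ_on(1) λ_on(2) λ_step(3) ) / ( 3 λ_off(3) [ λ_off(2) + λ_on(1) ] + λ_on(1)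 λ_on(2) ). -/
open Matrix

/-- run velocity formula for `M = 3` motors.  `Qt` is the birth–death
generator on states `{0,1,2,3}` with up rates `3·lon0`, `2·lon1`, `lon2` and down
rates `loff1`, `2·loff2`, `3·loff3`.  Any probability vector `p` with `p Qt = 0`
satisfies the stated run-velocity identity (equation (4.15) of the paper). -/
theorem run_velocity_three_motors
    (lon0 lon1 lon2 loff1 loff2 loff3 lstep1 lstep2 lstep3 : ℝ)
    (hon0 : 0 < lon0) (hon1 : 0 < lon1) (hon2 : 0 < lon2)
    (hoff1 : 0 < loff1) (hoff2 : 0 < loff2) (hoff3 : 0 < loff3)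
    (hstep1 : 0 < lstep1) (hstep2 : 0 < lstep2) (hstep3 : 0 < lstep3)
    (Qt : Matrix (Fin 4) (Fin 4) ℝ)
    (hQt : Qt = !![-(3 * lon0), 3 * lon0, 0, 0;
                   loff1, -(loff1 + 2 * lon1), 2 * lon1, 0;
                   0, 2 * loff2, -(2 * loff2 + lon2), lon2;
                   0, 0, 3 * loff3, -(3 * loff3)])
    (p : Fin 4 → ℝ)
    (hp_nonneg : ∀ i, 0 ≤ p i) (hp_sum : ∑ i, p i = 1)
    (hp_stat : Matrix.vecMul p Qt = 0) :
    (lstep1 * p 1 + lstep2 * p 2 + lstep3 * p 3) / (p 1 + p 2 + p 3)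
      = (3 * loff3 * (loff2 * lstep1 + lon1 * lstep2) + lon1 * lon2 * lstep3)
        / (3 * loff3 * (loff2 + lon1) + lon1 * lon2) := by
  subst hQt
  have h0 := congrFun hp_stat 0
  have h1 := congrFun hp_stat 1
  have h3 := congrFun hp_stat 3
  simp [Matrix.vecMul, dotProduct, Fin.sum_univ_four, Matrix.vecHead,
    Matrix.vecTail] at h0 h1 h3
  have e2 : loff2 * p 2 = lon1 * p 1 := by linarith
  have e3 : 3 * loff3 * p 3 = lon2 * p 2 := by linarith
  have hp1 : 0 < p 1 := by
    rcases lt_or_eq_of_le (hp_nonneg 1) with h | h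
    · exact h
    · exfalso
      have hp2 : p 2 = 0 := by
        have := e2; nlinarith [hoff2]
      have hp3 : p 3 = 0 := by nlinarith [hoff3]
      have hp0 : p 0 = 0 := by nlinarith [hon0]
      rw [Fin.sum_univ_four, hp0, hp2, hp3, ← h] at hp_sum
      norm_num at hp_sum
  have hden : 0 < p 1 + p 2 + p 3 := by
    have := hp_nonneg 2; have := hp_nonneg 3; linarith
  have hden2 : 0 < 3 * loff3 * (loff2 + lon1) + lon1 * lon2 := by positivity
  rw [div_eq_div_iff hden.ne' hden2.ne']
  have hp2 : p 2 = lon1 * p 1 / loff2 := by field_simp; linarith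
  have hp3 : p 3 = lon2 * (lon1 * p 1 / loff2) / (3 * loff3) := by
    rw [← hp2]; field_simp; linarith
  rw [hp2, hp3]
  field_simp
end

section
/- Let λ_on(0), λ_on(1), λ_on(2), λ_off(2), λ_off(3), λ_step(1), λ_step(2), λ_step(3) be positive reals and set λ_off(1) = 1. Let Q̃ be the birth–death generator for M = 3 (a 4×4 matrix indexed by {0,1,2,3} with up rates 3λ_on(0) from 0, 2λ_on(1) from 1, λ_on(2) from 2, and down rates 1 from 1, 2λ_off(2) from 2, 3λ_off(3) from 3), let Q be the 3×3 matrix obtained by deleting the row and column indexed by 0, let p = (p₀, p₁, p₂, p₃) be a probability vector with p Q̃ = 0, and let t = (t₁, t₂, t₃) solve Qᵀ t = −e₁. Then ( 1/(3 λ_on(0)) + t₁ + t₂ + t₃ ) · ( λ_step(1) p₁ + λ_step(2) p₂ + λ_step(3) p₃ ) = λ_step(1) + λ_on(1) ( 3 λ_off(3) λ_step(2) + λ_on(2) λ_step(3) ) / ( 3 λ_off(2) λ_off(3) ). -/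
open Matrix

/-- expected run length formula for `M = 3` motors, in dimensionless
units where `loff1 = 1`.  `Qt` is the birth–death generator on `{0,1,2,3}`, `Q` the
matrix obtained by deleting the row and column indexed by `0`, `p` a probability
vector with `p Qt = 0`, and `t` solves `Qᵀ t = −e₁`.  Then the run-length identity
(equation (4.15) of the paper) holds. -/
theorem run_length_three_motors
    (lon0 lon1 lon2 loff2 loff3 lstep1 lstep2 lstep3 : ℝ)
    (hon0 : 0 < lon0) (hon1 : 0 < lon1) (hon2 : 0 < lon2)
    (hoff2 : 0 < loff2) (hoff3 : 0 < loff3)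
    (hstep1 : 0 < lstep1) (hstep2 : 0 < lstep2) (hstep3 : 0 < lstep3)
    (Qt : Matrix (Fin 4) (Fin 4) ℝ)
    (hQt : Qt = !![-(3 * lon0), 3 * lon0, 0, 0;
                   1, -(1 + 2 * lon1), 2 * lon1, 0;
                   0, 2 * loff2, -(2 * loff2 + lon2), lon2;
                   0, 0, 3 * loff3, -(3 * loff3)])
    (Q : Matrix (Fin 3) (Fin 3) ℝ)
    (hQ : Q = !![-(1 + 2 * lon1), 2 * lon1, 0;
                 2 * loff2, -(2 * loff2 + lon2), lon2;
                 0, 3 * loff3, -(3 * loff3)])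
    (p : Fin 4 → ℝ)
    (hp_nonneg : ∀ i, 0 ≤ p i) (hp_sum : ∑ i, p i = 1)
    (hp_stat : Matrix.vecMul p Qt = 0)
    (t : Fin 3 → ℝ)
    (ht : Matrix.mulVec Qᵀ t = -(Pi.single 0 1)) :
    (1 / (3 * lon0) + t 0 + t 1 + t 2) * (lstep1 * p 1 + lstep2 * p 2 + lstep3 * p 3)
      = lstep1 + lon1 * (3 * loff3 * lstep2 + lon2 * lstep3) / (3 * loff2 * loff3) := by
  subst hQt hQ
  have E0 := congrFun ht 0
  have E1 := congrFun ht 1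
  have E2 := congrFun ht 2
  simp [Matrix.mulVec, dotProduct, Fin.sum_univ_three, Matrix.transpose,
    Pi.single_apply] at E0 E1 E2
  have P0 := congrFun hp_stat 0
  have P1 := congrFun hp_stat 1
  have P3 := congrFun hp_stat 3
  simp [Matrix.vecMul, dotProduct, Fin.sum_univ_four, Matrix.vecHead,
    Matrix.vecTail] at P0 P1 P3
  have hl2 := hoff2.ne'
  have hl3 := hoff3.ne'
  have hl0 := hon0.ne'
  have h3l0 : (3 : ℝ) * lon0 ≠ 0 := by positivity
  have h3l23 : (3 : ℝ) * loff2 * loff3 ≠ 0 := by positivity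
  have ht0 : t 0 = 1 := by linarith [E0, E1, E2]
  have ht1' : loff2 * t 1 = lon1 := by
    linear_combination (-1/2 : ℝ) * E1 + (-1/2 : ℝ) * E2 + lon1 * ht0
  have ht1 : t 1 = lon1 / loff2 := by
    rw [eq_div_iff hl2]; linear_combination ht1'
  have ht2 : t 2 = lon1 * lon2 / (3 * loff2 * loff3) := by
    rw [eq_div_iff h3l23]
    linear_combination (-loff2) * E2 + lon2 * ht1'
  have hp2' : loff2 * p 2 = lon1 * p 1 := by
    linear_combination (1/2 : ℝ) * P0 + (1/2 : ℝ) * P1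
  have hp2 : p 2 = lon1 * p 1 / loff2 := by
    rw [eq_div_iff hl2]; linear_combination hp2'
  have hp3 : p 3 = lon1 * lon2 * p 1 / (3 * loff2 * loff3) := by
    rw [eq_div_iff h3l23]
    linear_combination (-loff2) * P3 + lon2 * hp2'
  have hp0 : p 0 = p 1 / (3 * lon0) := by
    rw [eq_div_iff h3l0]
    linear_combination -P0
  have hsum : p 0 + p 1 + p 2 + p 3 = 1 := by
    simpa [Fin.sum_univ_four] using hp_sum
  have hkey : p 1 * (1 / (3 * lon0) + 1 + lon1 / loff2 + lon1 * lon2 / (3 * loff2 * loff3))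
      = 1 := by
    rw [hp0, hp2, hp3] at hsum
    field_simp at hsum ⊢
    linear_combination hsum
  have hfac : lstep1 * p 1 + lstep2 * p 2 + lstep3 * p 3
      = p 1 * (lstep1 + lon1 * (3 * loff3 * lstep2 + lon2 * lstep3) / (3 * loff2 * loff3)) := by
    rw [hp2, hp3]
    field_simp
    ring
  rw [ht0, ht1, ht2, hfac]
  calc (1 / (3 * lon0) + 1 + lon1 / loff2 + lon1 * lon2 / (3 * loff2 * loff3)) *
        (p 1 * (lstep1 + lon1 * (3 * loff3 * lstep2 + lon2 * lstep3) / (3 * loff2 * loff3)))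
      = (p 1 * (1 / (3 * lon0) + 1 + lon1 / loff2 + lon1 * lon2 / (3 * loff2 * loff3))) *
        (lstep1 + lon1 * (3 * loff3 * lstep2 + lon2 * lstep3) / (3 * loff2 * loff3)) := by ring
    _ = 1 * (lstep1 + lon1 * (3 * loff3 * lstep2 + lon2 * lstep3) / (3 * loff2 * loff3)) := by
        rw [hkey]
    _ = lstep1 + lon1 * (3 * loff3 * lstep2 + lon2 * lstep3) / (3 * loff2 * loff3) := one_mul _
end
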